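/- Let γ ≥ 1 with γ ∉ ℕ and C ∈ ℝ \ {0}. With m₊(z,γ) = -C²(2/π) sin(πγ) e^{-iπγ} z^γ (branch cut on [0,∞)), for all 0 ≤ λ₁ < λ₂ one has lim_{δ↓0} lim_{ε↓0} (1/π) ∫_{λ₁+δ}^{λ₂+δ} Im(m₊(λ + iε, γ)) dλ = C² · (λ₂^{γ+1} - λ₁^{γ+1})/(γ+1) · (2/π²) sin²(πγ). -/

import Mathlib

open Filter

/-- The argument of `z` taken in `(0, 2π)` (branch cut along `[0,∞)`). -/
noncomputable def argCut (z : ℂ) : ℝ :=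
  if 0 < Complex.arg z then Complex.arg z else Complex.arg z + 2 * Real.pi

/-- `z^γ = |z|^γ e^{iγ arg z}` with `arg z ∈ (0,2π)` (branch cut along `[0,∞)`). -/
noncomputable def cpowCut (γ : ℝ) (z : ℂ) : ℂ :=
  ((‖z‖ ^ γ : ℝ) : ℂ) * Complex.exp (Complex.I * ((γ * argCut z : ℝ) : ℂ))

/-- The Weyl–Titchmarsh coefficient `m₊(z,γ) = -C²(2/π) sin(πγ) e^{-iπγ} z^γ`. -/
noncomputable def mPlusSing (C γ : ℝ) (z : ℂ) : ℂ :=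
  ((-(C ^ 2) * (2 / Real.pi) * Real.sin (Real.pi * γ) : ℝ) : ℂ) *
    Complex.exp (-Complex.I * ((Real.pi * γ : ℝ) : ℂ)) * cpowCut γ z

/-!
For `Im z > 0` the cut `argCut z` is just `arg z`, so `Im m₊(z) = A ‖z‖^γ sin(γ arg z - πγ)` with
`A = -C²(2/π) sin(πγ)`. This expression is continuous on the slit plane, hence on a compact
rectangle `[a, b] × [0, 1]` with `a, b > 0`, so by dominated convergence the integrals over the
horizontal segments at height `ε` converge to the integral of its boundary value
`A l^γ sin(-πγ) = C²(2/π) sin²(πγ) l^γ`. Integrating `l^γ` and letting `δ ↓ 0` gives the formula.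
-/

open Complex Set Filter Topology MeasureTheory intervalIntegral
open scoped Interval
open Real hiding exp

theorem argCut_of_im_pos {z : ℂ} (hz : 0 < z.im) : argCut z = arg z :=
  if_pos <| (arg_nonneg_iff.2 hz.le).lt_of_ne fun h => hz.ne' (arg_eq_zero_iff.1 h.symm).2

/-- The continuous extension of `Im m₊` from the upper half-plane across the cut `(0, ∞)`. -/
noncomputable def imMPlusUpper (C γ : ℝ) (z : ℂ) : ℝ :=
  -(C ^ 2) * (2 / π) * Real.sin (π * γ) * (‖z‖ ^ γ * Real.sin (γ * arg z - π * γ))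

theorem im_mPlusSing_of_im_pos (C γ : ℝ) {z : ℂ} (hz : 0 < z.im) :
    (mPlusSing C γ z).im = imMPlusUpper C γ z := by
  have hexp : exp (-I * ((π * γ : ℝ) : ℂ)) * exp (I * ((γ * arg z : ℝ) : ℂ)) =
      exp (((γ * arg z - π * γ : ℝ) : ℂ) * I) := by
    rw [← Complex.exp_add]
    push_cast
    ring_nf
  have hm : mPlusSing C γ z = ((-(C ^ 2) * (2 / π) * Real.sin (π * γ) : ℝ) : ℂ) *
      ((‖z‖ ^ γ : ℝ) : ℂ) * exp (((γ * arg z - π * γ : ℝ) : ℂ) * I) := by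
    rw [mPlusSing, cpowCut, argCut_of_im_pos hz, ← hexp]
    ring
  rw [hm, imMPlusUpper]
  simp only [mul_im, mul_re, ofReal_re, ofReal_im, exp_ofReal_mul_I_re, exp_ofReal_mul_I_im]
  ring

theorem continuousOn_imMPlusUpper (C γ : ℝ) : ContinuousOn (imMPlusUpper C γ) slitPlane := by
  intro z hz
  have hnorm : ‖z‖ ≠ 0 := norm_ne_zero_iff.2 (slitPlane_ne_zero hz)
  have harg : ContinuousAt arg z := continuousAt_arg hz
  exact (continuousAt_const.mul ((continuous_norm.continuousAt.rpow_const (Or.inl hnorm)).mul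
    (Real.continuous_sin.continuousAt.comp ((continuousAt_const.mul harg).sub
      continuousAt_const)))).continuousWithinAt

theorem imMPlusUpper_ofReal (C γ : ℝ) {l : ℝ} (hl : 0 ≤ l) :
    imMPlusUpper C γ l = C ^ 2 * (2 / π) * Real.sin (π * γ) ^ 2 * l ^ γ := by
  rw [imMPlusUpper, arg_ofReal_of_nonneg hl, norm_real, Real.norm_of_nonneg hl, mul_zero,
    zero_sub, Real.sin_neg]
  ring

theorem tendsto_intervalIntegral_add_mul_I {E : Type*} [NormedAddCommGroup E] [NormedSpace ℝ E]
    {F : ℂ → E} {a b : ℝ} (hF : ContinuousOn F ([[a, b]] ×ℂ Icc 0 1)) :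
    Tendsto (fun ε : ℝ => ∫ l in a..b, F (l + ε * I)) (𝓝[>] 0) (𝓝 (∫ l in a..b, F l)) := by
  have hmem : ∀ l ∈ [[a, b]], ∀ ε ∈ Icc (0 : ℝ) 1, (l : ℂ) + ε * I ∈ [[a, b]] ×ℂ Icc 0 1 := by
    intro l hl ε hε
    simpa [mem_reProdIm] using ⟨hl, hε⟩
  obtain ⟨M, hM⟩ := (isCompact_uIcc.reProdIm isCompact_Icc).exists_bound_of_continuousOn hF
  have hsegment : ∀ᶠ ε in 𝓝[>] (0 : ℝ), ε ∈ Icc (0 : ℝ) 1 :=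
    mem_of_superset (Ioc_mem_nhdsGT one_pos) Ioc_subset_Icc_self
  refine tendsto_integral_filter_of_dominated_convergence (fun _ => M) ?_ ?_
    intervalIntegrable_const ?_
  · filter_upwards [hsegment] with ε hε
    refine (ContinuousOn.intervalIntegrable ?_).def'.aestronglyMeasurable
    exact hF.comp (by fun_prop) fun l hl => hmem l hl ε hε
  · filter_upwards [hsegment] with ε hε
    exact ae_of_all _ fun l hl => hM _ (hmem l (uIoc_subset_uIcc hl) ε hε)
  · refine ae_of_all _ fun l hl' => ?_
    have hl : l ∈ [[a, b]] := uIoc_subset_uIcc hl'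
    have hF' : ContinuousWithinAt F ([[a, b]] ×ℂ Icc 0 1) l := hF l (by simpa using hmem l hl 0)
    refine hF'.tendsto.comp (tendsto_nhdsWithin_iff.2 ⟨?_, ?_⟩)
    · simpa using ((by fun_prop : Continuous fun ε : ℝ => (l : ℂ) + ε * I).tendsto 0).mono_left
        (nhdsWithin_le_nhds (s := Ioi 0))
    · filter_upwards [hsegment] with ε hε using hmem l hl ε hε

theorem tendsto_integral_im_mPlusSing (C γ : ℝ) {a b : ℝ} (ha : 0 < a) (hb : 0 < b) :
    Tendsto (fun ε : ℝ => ∫ l in a..b, (mPlusSing C γ (l + ε * I)).im) (𝓝[>] 0)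
      (𝓝 (C ^ 2 * (2 / π) * Real.sin (π * γ) ^ 2 * ∫ l in a..b, l ^ γ)) := by
  have hpos : ∀ l ∈ [[a, b]], 0 < l := fun l hl => (lt_min ha hb).trans_le hl.1
  have hslit : [[a, b]] ×ℂ Icc 0 1 ⊆ slitPlane := fun z hz =>
    Or.inl (hpos _ (mem_reProdIm.1 hz).1)
  have hlim := tendsto_intervalIntegral_add_mul_I ((continuousOn_imMPlusUpper C γ).mono hslit)
  rw [integral_congr fun l hl => imMPlusUpper_ofReal C γ (hpos l hl).le,
    intervalIntegral.integral_const_mul] at hlim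
  refine hlim.congr' ?_
  filter_upwards [self_mem_nhdsWithin] with ε (hε : 0 < ε)
  exact integral_congr fun l _ => (im_mPlusSing_of_im_pos C γ (by simpa using hε)).symm

theorem mPlusSing_spectral_function_general (C γ : ℝ) (hγ : 1 ≤ γ)
    (lam1 lam2 : ℝ) (h1 : 0 ≤ lam1) (h12 : lam1 < lam2) :
    ∃ L : ℝ → ℝ,
      (∀ δ > 0, Tendsto (fun ε : ℝ =>
          (1 / Real.pi) *
            ∫ l in (lam1 + δ)..(lam2 + δ),
              (mPlusSing C γ ((l : ℂ) + ε * Complex.I)).im)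
        (nhdsWithin 0 (Set.Ioi 0)) (nhds (L δ))) ∧
      Tendsto L (nhdsWithin 0 (Set.Ioi 0))
        (nhds (C ^ 2 * ((lam2 ^ (γ + 1) - lam1 ^ (γ + 1)) / (γ + 1)) *
          (2 / Real.pi ^ 2) * Real.sin (Real.pi * γ) ^ 2)) := by
  set K := C ^ 2 * (2 / π) * Real.sin (π * γ) ^ 2
  have hγ' : -1 < γ := by linarith
  refine ⟨fun δ => 1 / π * (K * (((lam2 + δ) ^ (γ + 1) - (lam1 + δ) ^ (γ + 1)) / (γ + 1))),
    fun δ hδ => ?_, ?_⟩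
  · have h := (tendsto_integral_im_mPlusSing C γ (a := lam1 + δ) (b := lam2 + δ)
      (by linarith) (by linarith)).const_mul (1 / π)
    rwa [integral_rpow (Or.inl hγ')] at h
  · have hpow : Continuous fun x : ℝ => x ^ (γ + 1) := Real.continuous_rpow_const (by linarith)
    have hL : Continuous fun δ : ℝ =>
        1 / π * (K * (((lam2 + δ) ^ (γ + 1) - (lam1 + δ) ^ (γ + 1)) / (γ + 1))) := by
      fun_prop
    convert (hL.tendsto 0).mono_left nhdsWithin_le_nhds using 2
    simp only [add_zero, K]
    field_simp

/-- The spectral function of `H₊(γ)`: the Stieltjes-type inversion of `m₊` gives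
`ρ₊((λ₁,λ₂]) = C² (λ₂^{γ+1} - λ₁^{γ+1})/(γ+1) · (2/π²) sin²(πγ)`. -/
theorem mPlusSing_spectral_function (C γ : ℝ) (hγ : 1 ≤ γ) (hnat : ∀ n : ℕ, γ ≠ n)
    (hC : C ≠ 0) (lam1 lam2 : ℝ) (h1 : 0 ≤ lam1) (h12 : lam1 < lam2) :
    ∃ L : ℝ → ℝ,
      (∀ δ > 0, Tendsto (fun ε : ℝ =>
          (1 / Real.pi) *
            ∫ l in (lam1 + δ)..(lam2 + δ),
              (mPlusSing C γ ((l : ℂ) + ε * Complex.I)).im)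
        (nhdsWithin 0 (Set.Ioi 0)) (nhds (L δ))) ∧
      Tendsto L (nhdsWithin 0 (Set.Ioi 0))
        (nhds (C ^ 2 * ((lam2 ^ (γ + 1) - lam1 ^ (γ + 1)) / (γ + 1)) *
          (2 / Real.pi ^ 2) * Real.sin (Real.pi * γ) ^ 2)) :=
  mPlusSing_spectral_function_general C γ hγ lam1 lam2 h1 h12
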